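/- For every positive odd integer n and integer m with 1 ≤ m ≤ (n+1)/2: sum_{k=0}^{n-m} (q^{2m-1};q^2)_k / (q;q)_k * q^k ≡ (-1)^{(n-1)/2 + m - 1} * q^{(n^2-1)/4 - m^2 + m} (mod Phi_n(q)). -/

import Mathlib

open Finset Polynomial

/-- The q-Pochhammer symbol `(a; q)_n` in the field of rational functions. -/
noncomputable def qPoch (a q : RatFunc ℚ) (n : ℕ) : RatFunc ℚ :=
  ∏ j ∈ Finset.range n, (1 - a * q ^ j)

/-- `A ≡ B (mod Φ_n(q)^e)` in the localization of `ℚ[q]` at the n-th cyclotomic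
polynomial. -/
def CongrModCyclo (n e : ℕ) (A B : RatFunc ℚ) : Prop :=
  ∃ u v : Polynomial ℚ, ¬ (Polynomial.cyclotomic n ℚ ∣ v) ∧
    (A - B) * algebraMap (Polynomial ℚ) (RatFunc ℚ) v
      = algebraMap (Polynomial ℚ) (RatFunc ℚ) ((Polynomial.cyclotomic n ℚ) ^ e * u)

noncomputable def q : RatFunc ℚ := RatFunc.X

/-!
Write `n = 2M + 2m - 1` and let `ζ` be a primitive `n`-th root of unity. Then `ζ^(2m-1) = x²`
with `x = ζ^(-M)`, and `(x²; ζ²)_k = (x; ζ)_k (-x; ζ)_k` turns the sum at `q = ζ` into a partial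
sum of `₂φ₁(x, -x; 0; ζ, ζ)`. As `x = ζ^(-M)` this series terminates, and the `c → 0` limit of the
q-Chu–Vandermonde sum, `₂φ₁(q^(-M), b; 0; q, q) = b^M`, evaluates it to
`(-x)^M = (-1)^M ζ^(-M²) = (-1)^M ζ^(M(n-M))`, the right-hand side at `ζ`. Clearing the
denominator `(q; q)_(n-m)`, which does not vanish at `ζ`, the congruence becomes the vanishing at
`ζ` of a polynomial, i.e. its divisibility by the minimal polynomial `Φ_n` of `ζ`.
-/

def qPochhammer {R : Type*} [CommRing R] (a q : R) (k : ℕ) : R :=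
  ∏ j ∈ range k, (1 - a * q ^ j)

section CommRing

variable {R : Type*} [CommRing R]

@[simp]
lemma qPochhammer_zero (a q : R) : qPochhammer a q 0 = 1 := by
  simp [qPochhammer]

lemma qPochhammer_succ (a q : R) (k : ℕ) :
    qPochhammer a q (k + 1) = qPochhammer a q k * (1 - a * q ^ k) :=
  prod_range_succ _ _

lemma qPochhammer_succ' (a q : R) (k : ℕ) :
    qPochhammer a q (k + 1) = (1 - a) * qPochhammer (a * q) q k := by
  simp only [qPochhammer, prod_range_succ', pow_succ, pow_zero, mul_one, mul_assoc, mul_comm q]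
  ring

lemma qPochhammer_add (a q : R) (k l : ℕ) :
    qPochhammer a q (k + l) = qPochhammer a q k * qPochhammer (a * q ^ k) q l := by
  simp only [qPochhammer, prod_range_add, pow_add, mul_assoc]

lemma qPochhammer_sq_sq (a q : R) (k : ℕ) :
    qPochhammer (a ^ 2) (q ^ 2) k = qPochhammer a q k * qPochhammer (-a) q k := by
  simp only [qPochhammer, ← prod_mul_distrib, ← pow_mul]
  refine prod_congr rfl fun j _ => ?_
  ring

lemma map_qPochhammer {S F : Type*} [CommRing S] [FunLike F R S] [RingHomClass F R S] (f : F)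
    (a q : R) (k : ℕ) : f (qPochhammer a q k) = qPochhammer (f a) (f q) k := by
  simp [qPochhammer, map_prod]

def clearedSum (a p q : R) (L : ℕ) : R :=
  ∑ k ∈ range (L + 1), qPochhammer a p k * q ^ k * qPochhammer (q * q ^ k) q (L - k)

lemma map_clearedSum {S F : Type*} [CommRing S] [FunLike F R S] [RingHomClass F R S] (f : F)
    (a p q : R) (L : ℕ) : f (clearedSum a p q L) = clearedSum (f a) (f p) (f q) L := by
  simp [clearedSum, map_qPochhammer]

end CommRing

section Field

variable {K : Type*} [Field K]

lemma qPochhammer_ne_zero_of_le {a q : K} {k l : ℕ} (hkl : k ≤ l)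
    (h : qPochhammer a q l ≠ 0) : qPochhammer a q k ≠ 0 := by
  obtain ⟨d, rfl⟩ := Nat.exists_eq_add_of_le hkl
  exact left_ne_zero_of_mul (qPochhammer_add a q k d ▸ h)

lemma sum_div_qPochhammer_mul {q : K} {L : ℕ} (hL : qPochhammer q q L ≠ 0) (a p : K) :
    (∑ k ∈ range (L + 1), qPochhammer a p k / qPochhammer q q k * q ^ k) * qPochhammer q q L
      = clearedSum a p q L := by
  rw [clearedSum, sum_mul]
  refine sum_congr rfl fun k hk => ?_
  have hkL : k ≤ L := Nat.lt_succ_iff.mp (mem_range.mp hk)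
  have hk := qPochhammer_ne_zero_of_le hkL hL
  rw [← Nat.add_sub_cancel' hkL, qPochhammer_add, Nat.add_sub_cancel_left]
  field_simp

/-- Partial sum of the basic hypergeometric series `₂φ₁(a, b; 0; q, q)`. -/
def phiSum (a b q : K) (N : ℕ) : K :=
  ∑ k ∈ range N, qPochhammer a q k * qPochhammer b q k / qPochhammer q q k * q ^ k

lemma phiSum_contiguous (a b q : K) (N : ℕ) (hN : qPochhammer q q N ≠ 0) :
    phiSum a b q (N + 1)
      = phiSum (a * q) b q (N + 1) - a * q * (1 - b) * phiSum (a * q) (b * q) q N := by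
  simp only [phiSum, sum_range_succ' _ N, mul_sum, qPochhammer_zero]
  rw [add_sub_right_comm, ← sum_sub_distrib]
  congr 1
  refine sum_congr rfl fun k hk => ?_
  have hk := qPochhammer_ne_zero_of_le (mem_range.mp hk) hN
  rw [qPochhammer_succ] at hk
  obtain ⟨hqk, hk1⟩ := mul_ne_zero_iff.mp hk
  rw [qPochhammer_succ' a, qPochhammer_succ' b, qPochhammer_succ (a * q), qPochhammer_succ q]
  field_simp
  ring

theorem phiSum_inv_pow_eq_pow {q : K} (hq : q ≠ 0) (b : K) {M N : ℕ} (hMN : M ≤ N)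
    (hN : qPochhammer q q N ≠ 0) : phiSum (q⁻¹ ^ M) b q (N + 1) = b ^ M := by
  induction M generalizing b N with
  | zero => simp [phiSum, sum_range_succ', qPochhammer_succ']
  | succ M ih =>
    obtain ⟨N, rfl⟩ : ∃ N', N = N' + 1 := ⟨N - 1, by omega⟩
    have hinv : q⁻¹ ^ (M + 1) * q = q⁻¹ ^ M := by
      rw [pow_succ, mul_assoc, inv_mul_cancel₀ hq, mul_one]
    rw [phiSum_contiguous _ _ _ _ hN, hinv, ih b (by omega) hN,
      ih (b * q) (by omega) (qPochhammer_ne_zero_of_le N.le_succ hN), mul_pow, inv_pow]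
    field_simp
    ring

lemma qPochhammer_self_ne_zero {ζ : K} {n L : ℕ} (hζ : IsPrimitiveRoot ζ n) (hL : L < n) :
    qPochhammer ζ ζ L ≠ 0 := by
  refine prod_ne_zero_iff.mpr fun j hj => sub_ne_zero.mpr fun h => ?_
  rw [← pow_succ'] at h
  exact hζ.pow_ne_one_of_pos_of_lt j.succ_ne_zero (by simp at hj; omega) h.symm

theorem sum_qPochhammer_div_of_isPrimitiveRoot {ζ : K} {n r M L : ℕ} (hζ : IsPrimitiveRoot ζ n)
    (hn : r + 2 * M = n) (hML : M ≤ L) (hLn : L < n) :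
    ∑ k ∈ range (L + 1), qPochhammer (ζ ^ r) (ζ ^ 2) k / qPochhammer ζ ζ k * ζ ^ k
      = (-1) ^ M * ζ ^ (M * (n - M)) := by
  have hζ0 : ζ ≠ 0 := hζ.ne_zero (by omega)
  have hr : ζ ^ r = (ζ⁻¹ ^ M) ^ 2 := by
    rw [← pow_mul, inv_pow]
    refine eq_inv_of_mul_eq_one_left ?_
    rw [← pow_add, mul_comm, hn, hζ.pow_eq_one]
  have hM : (ζ⁻¹ ^ M) ^ M = ζ ^ (M * (n - M)) := by
    rw [← pow_mul, inv_pow]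
    refine (eq_inv_of_mul_eq_one_left ?_).symm
    rw [← pow_add, ← mul_add, Nat.sub_add_cancel (by omega), pow_mul', hζ.pow_eq_one, one_pow]
  calc _ = phiSum (ζ⁻¹ ^ M) (-(ζ⁻¹ ^ M)) ζ (L + 1) := by
        simp_rw [hr, qPochhammer_sq_sq]
        rfl
    _ = (-(ζ⁻¹ ^ M)) ^ M := phiSum_inv_pow_eq_pow hζ0 _ hML (qPochhammer_self_ne_zero hζ hLn)
    _ = _ := by rw [neg_pow, hM]

end Field

lemma congrModCyclo_of_aeval {K : Type*} [Field K] [CharZero K] {n : ℕ} (hn : 0 < n) {ζ : K}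
    (hζ : IsPrimitiveRoot ζ n) {A B : RatFunc ℚ} {v w : ℚ[X]}
    (h : (A - B) * algebraMap ℚ[X] (RatFunc ℚ) v = algebraMap ℚ[X] (RatFunc ℚ) w)
    (hv : aeval ζ v ≠ 0) (hw : aeval ζ w = 0) : CongrModCyclo n 1 A B := by
  have hΦ := cyclotomic_eq_minpoly_rat hζ hn
  obtain ⟨u, rfl⟩ : cyclotomic n ℚ ∣ w := hΦ ▸ minpoly.dvd ℚ ζ hw
  refine ⟨u, v, ?_, by rw [h, pow_one]⟩
  rintro ⟨c, rfl⟩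
  exact hv (by rw [map_mul, hΦ, minpoly.aeval, zero_mul])

lemma sq_sub_one_div_four_sub_sq_add {n m M : ℕ} (hm : 1 ≤ m) (hn : 2 * m - 1 + 2 * M = n) :
    ((n : ℤ) ^ 2 - 1) / 4 - m ^ 2 + m = ((M * (n - M) : ℕ) : ℤ) := by
  obtain ⟨m, rfl⟩ := Nat.exists_eq_add_of_le' hm
  obtain rfl : n = 2 * m + 2 * M + 1 := by omega
  rw [show 2 * m + 2 * M + 1 - M = 2 * m + M + 1 by omega]
  push_cast
  rw [show (2 * m + 2 * M + 1 : ℤ) ^ 2 - 1 = 4 * ((m + M) * (m + M + 1)) by ring,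
    Int.mul_ediv_cancel_left _ four_ne_zero]
  ring

theorem qcongruence_thm_general (n m : ℕ) (hn : Odd n)
    (hm1 : 1 ≤ m) (hm2 : m ≤ (n + 1) / 2) :
    CongrModCyclo n 1
      (∑ k ∈ range (n - m + 1),
        qPoch (q ^ (2 * m - 1)) (q ^ 2) k / qPoch q q k * q ^ k)
      ((-1) ^ ((n - 1) / 2 + m - 1)
        * q ^ ((((n : ℤ) ^ 2 - 1) / 4) - (m : ℤ) ^ 2 + (m : ℤ))) := by
  obtain ⟨M, hM⟩ : ∃ M, 2 * m - 1 + 2 * M = n := ⟨(n + 1) / 2 - m, by grind⟩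
  have hsign : (n - 1) / 2 + m - 1 = M + 2 * (m - 1) := by omega
  rw [hsign, sq_sub_one_div_four_sub_sq_add hm1 hM, zpow_natCast, pow_add, pow_mul, neg_one_sq, one_pow, mul_one]
  obtain ⟨ζ, hζ⟩ : ∃ ζ : ℂ, IsPrimitiveRoot ζ n := ⟨_, Complex.isPrimitiveRoot_exp n hn.pos.ne'⟩
  have hζL := qPochhammer_self_ne_zero hζ (show n - m < n by omega)
  have hv : aeval ζ (qPochhammer (X : ℚ[X]) X (n - m)) ≠ 0 := by simpa [map_qPochhammer] using hζL
  have hqL : qPochhammer q q (n - m) ≠ 0 := by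
    have hX : qPochhammer (X : ℚ[X]) X (n - m) ≠ 0 := fun h => hv (by rw [h, map_zero])
    simpa [map_qPochhammer, q] using RatFunc.algebraMap_ne_zero hX
  refine congrModCyclo_of_aeval hn.pos hζ (w := clearedSum (X ^ (2 * m - 1)) (X ^ 2) X (n - m)
    - (-1) ^ M * X ^ (M * (n - M)) * qPochhammer X X (n - m)) ?_ hv ?_
  · simp only [map_sub, map_mul, map_pow, map_neg, map_one, map_clearedSum, map_qPochhammer,
      RatFunc.algebraMap_X, ← q.eq_1]
    rw [sub_mul, ← sum_div_qPochhammer_mul hqL]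
    rfl -- `qPoch` is `qPochhammer` on `RatFunc ℚ`
  · simp only [map_sub, map_mul, map_pow, map_neg, map_one, map_clearedSum, map_qPochhammer,
      aeval_X, ← sum_div_qPochhammer_mul hζL,
      sum_qPochhammer_div_of_isPrimitiveRoot (L := n - m) hζ hM (by omega) (by omega), sub_self]

theorem qcongruence_thm (n m : ℕ) (hn : Odd n) (hn0 : 0 < n)
    (hm1 : 1 ≤ m) (hm2 : m ≤ (n + 1) / 2) :
    CongrModCyclo n 1
      (∑ k ∈ range (n - m + 1),
        qPoch (q ^ (2 * m - 1)) (q ^ 2) k / qPoch q q k * q ^ k)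
      ((-1) ^ ((n - 1) / 2 + m - 1)
        * q ^ ((((n : ℤ) ^ 2 - 1) / 4) - (m : ℤ) ^ 2 + (m : ℤ))) :=
  qcongruence_thm_general n m hn hm1 hm2
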